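/- arXiv:2206.07567 — 8 statements merged into one kernel-verified Lean document; each statement's English description precedes it below -/
import Mathlib

section
/- Let d ≥ 1, let S ⊆ ℝ^d be a nonempty finite set, let Q be the convex hull of S, and let D be the diameter of Q. Let 0 < α ≤ 1 and 0 < β ≤ 1. Suppose p ∈ Q is α-centered, i.e., there exists v ∈ ℝ^d with ‖v‖ = α·D/2 such that the segment [p − v, p + v] is contained in Q. Let p' be any point of the scaled polytope Q(p, β) = {p + (1−β)·(q − p) : q ∈ Q}. Then p' is (α·β)-centered in Q: there exists w ∈ ℝ^d with ‖w‖ ≥ α·β·D/2 such that the segment [p' − w, p' + w] is contained in Q. -/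
open AffineMap Set

theorem Convex.segment_homothety_subset {𝕜 E : Type*} [Field 𝕜] [LinearOrder 𝕜]
    [IsStrictOrderedRing 𝕜] [AddCommGroup E] [Module 𝕜 E] {s : Set E} (hs : Convex 𝕜 s)
    {q a b : E} (hq : q ∈ s) (hab : segment 𝕜 a b ⊆ s) {t : 𝕜} (ht : t ∈ Icc 0 1) :
    segment 𝕜 (homothety q t a) (homothety q t b) ⊆ s := by
  rw [← image_segment]
  rintro _ ⟨y, hy, rfl⟩
  rw [homothety_eq_lineMap]
  exact hs.lineMap_mem hq (hab hy) ht

theorem alpha_beta_contracting_is_lambda_contracting_general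
    (d : ℕ)
    (S : Set (EuclideanSpace ℝ (Fin d)))
    (α β : ℝ) (hβ0 : 0 < β) (hβ1 : β ≤ 1)
    (p : EuclideanSpace ℝ (Fin d))
    (v : EuclideanSpace ℝ (Fin d))
    (hv : ‖v‖ = α * Metric.diam (convexHull ℝ S) / 2)
    (hseg : segment ℝ (p - v) (p + v) ⊆ convexHull ℝ S)
    (p' : EuclideanSpace ℝ (Fin d))
    (hp' : ∃ q ∈ convexHull ℝ S, p' = p + (1 - β) • (q - p)) :
    ∃ w : EuclideanSpace ℝ (Fin d),
      α * β * Metric.diam (convexHull ℝ S) / 2 ≤ ‖w‖ ∧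
      segment ℝ (p' - w) (p' + w) ⊆ convexHull ℝ S := by
  obtain ⟨q, hq, rfl⟩ := hp'
  refine ⟨β • v, ?_, ?_⟩
  · rw [norm_smul, hv, Real.norm_of_nonneg hβ0.le]
    exact le_of_eq (by ring)
  · -- `p ± v` is sent to `p' ± β • v` by the homothety of centre `q` and ratio `β`
    convert (convex_convexHull ℝ S).segment_homothety_subset hq hseg ⟨hβ0.le, hβ1⟩ using 1
    simp only [homothety_apply, vsub_eq_sub, vadd_eq_add]
    congr 1 <;> module

/-- Every point of the β-scaled polytope around an α-centered point of a
convex polytope Q is (α·β)-centered in Q. -/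
theorem alpha_beta_contracting_is_lambda_contracting
    (d : ℕ) (hd : 1 ≤ d)
    (S : Set (EuclideanSpace ℝ (Fin d))) (hSfin : S.Finite) (hSne : S.Nonempty)
    (α β : ℝ) (hα0 : 0 < α) (hα1 : α ≤ 1) (hβ0 : 0 < β) (hβ1 : β ≤ 1)
    (p : EuclideanSpace ℝ (Fin d)) (hp : p ∈ convexHull ℝ S)
    (v : EuclideanSpace ℝ (Fin d))
    (hv : ‖v‖ = α * Metric.diam (convexHull ℝ S) / 2)
    (hseg : segment ℝ (p - v) (p + v) ⊆ convexHull ℝ S)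
    (p' : EuclideanSpace ℝ (Fin d))
    (hp' : ∃ q ∈ convexHull ℝ S, p' = p + (1 - β) • (q - p)) :
    ∃ w : EuclideanSpace ℝ (Fin d),
      α * β * Metric.diam (convexHull ℝ S) / 2 ≤ ‖w‖ ∧
      segment ℝ (p' - w) (p' + w) ⊆ convexHull ℝ S :=
  alpha_beta_contracting_is_lambda_contracting_general d S α β hβ0 hβ1 p v hv hseg p' hp'
end

section
/- Let S ⊆ ℝ² be a nonempty finite set, let Q be its convex hull, and let D be the diameter of Q. Let c ∈ ℝ² and r ≥ 0 be the center and radius of the smallest enclosing circle of Q, i.e., Q ⊆ closedBall(c, r) and for every c' ∈ ℝ² and r' ≥ 0 with Q ⊆ closedBall(c', r') one has r ≤ r'. Then c is (√3/8)-centered in Q: there exists v ∈ ℝ² with ‖v‖ = (√3/16)·D such that the segment [c − v, c + v] is contained in Q. -/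
/-!
If `c` were not in the convex hull of the contact points `S ∩ sphere c r`, a hyperplane would
separate them from `c`, and moving the center slightly towards that side would bring every point
of `S` strictly inside the ball, contradicting minimality. By Carathéodory, `c` is then a convex
combination of at most three contact points, one of which, `p`, has weight at least `1/3`; the
reweighted combination `(3/2) c - (1/2) p` is still convex, so `c + (c - p)/2` lies in the hull.
Thus `Q` contains the segment of half-length `r/2` centred at `c` in direction `p - c`, and
`√3 D / 16 ≤ r / 2` since `D ≤ 2 r`.
-/

open RealInnerProductSpace Filter Topology Metric

section Reweighting

variable {E : Type*} [AddCommGroup E] [Module ℝ E]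

theorem add_smul_sub_mem_convexHull {ι : Type*} [Fintype ι] {w : ι → ℝ} {z : ι → E}
    (hw₀ : ∀ j, 0 ≤ w j) (hw₁ : ∑ j, w j = 1) {i : ι} {k : ℝ} (hk : 0 ≤ k)
    (hki : k ≤ (1 + k) * w i) :
    ∑ j, w j • z j + k • (∑ j, w j • z j - z i) ∈ convexHull ℝ (Set.range z) := by
  classical
  set μ : ι → ℝ := fun j => (1 + k) * w j - if j = i then k else 0
  have hμ₀ : ∀ j ∈ Finset.univ, 0 ≤ μ j := by
    intro j _
    by_cases hj : j = i
    · subst hj; simp [μ, hki]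
    · simpa [μ, hj] using mul_nonneg (by linarith : (0:ℝ) ≤ 1 + k) (hw₀ j)
  have hμ₁ : ∑ j, μ j = 1 := by
    simp [μ, Finset.sum_sub_distrib, ← Finset.mul_sum, hw₁]
  have hμz : ∑ j, μ j • z j = ∑ j, w j • z j + k • (∑ j, w j • z j - z i) := by
    simp only [μ, sub_smul, Finset.sum_sub_distrib, ite_smul, zero_smul, Finset.sum_ite_eq',
      Finset.mem_univ, if_true, mul_smul, ← Finset.smul_sum]
    module
  rw [← hμz]
  exact (convex_convexHull ℝ _).sum_mem hμ₀ hμ₁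
    fun j _ => subset_convexHull ℝ _ (Set.mem_range_self j)

end Reweighting

section Caratheodory

variable {E : Type*} [AddCommGroup E] [Module ℝ E] [FiniteDimensional ℝ E]

theorem exists_add_inv_finrank_smul_sub_mem_convexHull {T : Set E} {c : E}
    (hc : c ∈ convexHull ℝ T) :
    ∃ p ∈ T, c + (Module.finrank ℝ E : ℝ)⁻¹ • (c - p) ∈ convexHull ℝ T := by
  classical
  obtain ⟨ι, _, z, w, hzT, hz, hw₀, hw₁, rfl⟩ := eq_pos_convex_span_of_mem_convexHull hc
  set n := Module.finrank ℝ E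
  have hcard : (Fintype.card ι : ℝ) ≤ n + 1 := by
    have := hz.card_le_finrank_succ.trans (Nat.succ_le_succ (Submodule.finrank_le _))
    exact_mod_cast this
  have : Nonempty ι := by by_contra! h; simp at hw₁
  have hcard₀ : (0 : ℝ) < Fintype.card ι := by exact_mod_cast Fintype.card_pos
  obtain ⟨i, -, hi⟩ := Finset.exists_le_of_sum_le Finset.univ_nonempty
    (f := fun _ => (Fintype.card ι : ℝ)⁻¹) (g := w) (by simp [hw₁, hcard₀.ne'])
  have hwi : 1 ≤ (n + 1) * w i := by
    calc (1 : ℝ) ≤ Fintype.card ι * w i := by rwa [inv_le_iff_one_le_mul₀ hcard₀, mul_comm] at hi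
      _ ≤ (n + 1) * w i := by gcongr; exact (hw₀ i).le
  refine ⟨z i, hzT (Set.mem_range_self i), convexHull_mono hzT
    (add_smul_sub_mem_convexHull (fun j => (hw₀ j).le) hw₁ (by positivity) ?_)⟩
  rcases (Nat.cast_nonneg n : (0 : ℝ) ≤ n).eq_or_lt with hn | hn
  · simp [← hn, (hw₀ i).le]
  · calc (n : ℝ)⁻¹ = (n : ℝ)⁻¹ * 1 := (mul_one _).symm
      _ ≤ (n : ℝ)⁻¹ * ((n + 1) * w i) := by gcongr
      _ = (1 + (n : ℝ)⁻¹) * w i := by field_simp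

end Caratheodory

theorem Convex.exists_norm_eq_segment_subset {E : Type*} [NormedAddCommGroup E]
    [NormedSpace ℝ E] {Q : Set E} (hQ : Convex ℝ Q) {c p : E} {a ℓ : ℝ} (hc : c ∈ Q)
    (hp : p ∈ Q) (hq : c + a • (c - p) ∈ Q) (ha₀ : 0 < a) (ha₁ : a ≤ 1) (hℓ₀ : 0 ≤ ℓ)
    (hℓ : ℓ ≤ a * ‖p - c‖) :
    ∃ v, ‖v‖ = ℓ ∧ segment ℝ (c - v) (c + v) ⊆ Q := by
  rcases (norm_nonneg (p - c)).eq_or_lt with hpc | hpc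
  · obtain rfl : ℓ = 0 := by rw [← hpc, mul_zero] at hℓ; exact hℓ.antisymm hℓ₀
    exact ⟨0, norm_zero, by simpa [segment_same] using hc⟩
  set s := ℓ / ‖p - c‖
  have hs₀ : 0 ≤ s := by positivity
  have hsa : s ≤ a := (div_le_iff₀ hpc).2 hℓ
  refine ⟨s • (p - c), ?_, hQ.segment_subset ?_ ?_⟩
  · rw [norm_smul, Real.norm_of_nonneg hs₀, div_mul_cancel₀ _ hpc.ne']
  · have := (hQ.starConvex hc).add_smul_mem hq (div_nonneg hs₀ ha₀.le)
      (div_le_one_of_le₀ hsa ha₀.le)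
    rw [smul_smul, div_mul_cancel₀ _ ha₀.ne'] at this
    convert this using 1
    module
  · exact hQ.add_smul_sub_mem hc hp ⟨hs₀, hsa.trans ha₁⟩

section SmallestEnclosingBall

variable {E : Type*} [NormedAddCommGroup E] [InnerProductSpace ℝ E]

theorem eventually_dist_add_smul_lt {x c u : E} {r : ℝ} (hx : dist x c ≤ r)
    (hu : 0 < ⟪x - c, u⟫) : ∀ᶠ ε in 𝓝[>] (0 : ℝ), dist x (c + ε • u) < r := by
  have hu₀ : 0 < ‖u‖ ^ 2 := by
    have : u ≠ 0 := by rintro rfl; simp at hu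
    positivity
  filter_upwards [Ioo_mem_nhdsGT (div_pos (mul_pos two_pos hu) hu₀)] with ε ⟨hε₀, hε⟩
  rw [lt_div_iff₀ hu₀] at hε
  have hr : 0 ≤ r := dist_nonneg.trans hx
  refine lt_of_pow_lt_pow_left₀ 2 hr ?_
  calc dist x (c + ε • u) ^ 2 = dist x c ^ 2 - ε * (2 * ⟪x - c, u⟫ - ε * ‖u‖ ^ 2) := by
        rw [dist_eq_norm, dist_eq_norm, show x - (c + ε • u) = (x - c) - ε • u by abel,
          norm_sub_sq_real, real_inner_smul_right, norm_smul, Real.norm_of_nonneg hε₀.le]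
        ring
    _ < dist x c ^ 2 := by nlinarith
    _ ≤ r ^ 2 := by gcongr

variable [FiniteDimensional ℝ E]

theorem mem_convexHull_inter_sphere_of_minimal {S : Set E} (hS : S.Finite) (hSne : S.Nonempty)
    {c : E} {r : ℝ} (hball : convexHull ℝ S ⊆ closedBall c r)
    (hmin : ∀ c' r', 0 ≤ r' → convexHull ℝ S ⊆ closedBall c' r' → r ≤ r') :
    c ∈ convexHull ℝ (S ∩ sphere c r) := by
  by_contra hc
  obtain ⟨f, a, hfc, hf⟩ := geometric_hahn_banach_point_closed (convex_convexHull ℝ _)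
    ((hS.inter_of_left _).isCompact_convexHull (𝕜 := ℝ)).isClosed hc
  set u := (InnerProductSpace.toDual ℝ E).symm f
  have hu : ∀ x ∈ S ∩ sphere c r, 0 < ⟪x - c, u⟫ := fun x hx => by
    rw [real_inner_comm, inner_sub_right, InnerProductSpace.toDual_symm_apply,
      InnerProductSpace.toDual_symm_apply]
    linarith [hf x (subset_convexHull ℝ _ hx)]
  have hnear : ∀ x ∈ S, ∀ᶠ ε in 𝓝[>] (0 : ℝ), dist x (c + ε • u) < r := by
    intro x hx
    have hxr : dist x c ≤ r := hball (subset_convexHull ℝ S hx)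
    rcases hxr.lt_or_eq with hlt | heq
    · have : Tendsto (fun ε : ℝ => dist x (c + ε • u)) (𝓝 0) (𝓝 (dist x c)) := by
        simpa using (by fun_prop : Continuous fun ε : ℝ => dist x (c + ε • u)).tendsto 0
      exact nhdsWithin_le_nhds (this.eventually (eventually_lt_nhds hlt))
    · exact eventually_dist_add_smul_lt hxr (hu x ⟨hx, heq⟩)
  obtain ⟨ε, hε⟩ := ((hS.eventually_all).2 hnear).exists
  obtain ⟨r', hr', hsub⟩ := exists_lt_subset_ball (hS.isCompact_convexHull (𝕜 := ℝ)).isClosed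
    (convexHull_min hε (convex_ball _ r))
  obtain ⟨x, hx⟩ := hSne
  linarith [hmin _ r' (dist_nonneg.trans (hsub (subset_convexHull ℝ S hx)).le)
    (hsub.trans ball_subset_closedBall)]

end SmallestEnclosingBall

/-- The center of the smallest enclosing circle of the convex hull of a
finite point set in ℝ² is (√3/8)-centered. -/
theorem sec_center_is_sqrt3_div8_centered
    (S : Set (EuclideanSpace ℝ (Fin 2))) (hSfin : S.Finite) (hSne : S.Nonempty)
    (c : EuclideanSpace ℝ (Fin 2)) (r : ℝ) (hr : 0 ≤ r)
    (hball : convexHull ℝ S ⊆ Metric.closedBall c r)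
    (hmin : ∀ (c' : EuclideanSpace ℝ (Fin 2)) (r' : ℝ), 0 ≤ r' →
      convexHull ℝ S ⊆ Metric.closedBall c' r' → r ≤ r') :
    ∃ v : EuclideanSpace ℝ (Fin 2),
      ‖v‖ = Real.sqrt 3 / 16 * Metric.diam (convexHull ℝ S) ∧
      segment ℝ (c - v) (c + v) ⊆ convexHull ℝ S := by
  have hc := mem_convexHull_inter_sphere_of_minimal hSfin hSne hball hmin
  obtain ⟨p, ⟨hpS, hpr⟩, hq⟩ := exists_add_inv_finrank_smul_sub_mem_convexHull hc
  rw [finrank_euclideanSpace_fin] at hq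
  rw [mem_sphere, dist_eq_norm] at hpr
  have hsub : convexHull ℝ (S ∩ sphere c r) ⊆ convexHull ℝ S :=
    convexHull_mono Set.inter_subset_left
  have hD : diam (convexHull ℝ S) ≤ 2 * r :=
    (diam_mono hball isBounded_closedBall).trans (diam_closedBall hr)
  have hsqrt3 : Real.sqrt 3 ≤ 2 := Real.sqrt_le_iff.2 ⟨by norm_num, by norm_num⟩
  refine (convex_convexHull ℝ S).exists_norm_eq_segment_subset (hsub hc)
    (subset_convexHull ℝ S hpS) (hsub hq) (by norm_num) (by norm_num) (by positivity) ?_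
  rw [hpr]
  nlinarith [diam_nonneg (s := convexHull ℝ S), Real.sqrt_nonneg 3]
end

section
/- Let 0 < λ ≤ 1, R > 0, Δ > 0 with R ≤ Δ/√3. Let o, b, P, Q ∈ ℝ² with ‖b − o‖ = ‖P − o‖ = ‖Q − o‖ = R, ‖P − b‖ = ‖Q − b‖ = λ/8, and P ≠ Q. Then the height h := ‖b − (P + Q)/2‖ of the circular segment of the circle of radius R around o cut off by the chord PQ and containing b satisfies h ≥ (√3·λ²)/(64·π·Δ). -/
/-!
By Apollonius's theorem, every point equidistant from `P` and `Q` — in particular `b` and the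
centre `o` — satisfies `dist x P ^ 2 = dist x m ^ 2 + (dist P Q / 2) ^ 2`, where `m` is the
midpoint of `PQ`. Subtracting the two instances and using `|R - h| ≤ dist o m` gives
`dist P b ^ 2 ≤ 2 R h`, i.e. `h ≥ λ² / (128 R)`, which dominates the claimed bound since
`2 √3 R ≤ 2 Δ ≤ π Δ`.
-/

open EuclideanGeometry

section Geometry

variable {V P : Type*} [NormedAddCommGroup V] [InnerProductSpace ℝ V] [MetricSpace P]
  [NormedAddTorsor V P]

theorem dist_sq_eq_dist_midpoint_sq_add_half_dist_sq_of_dist_eq {a b c : P}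
    (h : dist a b = dist a c) :
    dist a b ^ 2 = dist a (midpoint ℝ b c) ^ 2 + (dist b c / 2) ^ 2 := by
  have := dist_sq_add_dist_sq_eq_two_mul_dist_midpoint_sq_add_half_dist_sq a b c
  rw [← h] at this
  linarith

theorem dist_sq_le_two_mul_radius_mul_dist_midpoint {o b p q : P} {r : ℝ}
    (hb : dist b o = r) (hp : dist p o = r) (hq : dist q o = r)
    (hpq : dist p b = dist q b) :
    dist p b ^ 2 ≤ 2 * r * dist b (midpoint ℝ p q) := by
  set m := midpoint ℝ p q
  have hb_apollonius : dist b p ^ 2 = dist b m ^ 2 + (dist p q / 2) ^ 2 :=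
    dist_sq_eq_dist_midpoint_sq_add_half_dist_sq_of_dist_eq (by rwa [dist_comm b, dist_comm b])
  have ho_apollonius : dist o p ^ 2 = dist o m ^ 2 + (dist p q / 2) ^ 2 :=
    dist_sq_eq_dist_midpoint_sq_add_half_dist_sq_of_dist_eq
      (by rw [dist_comm o, dist_comm o, hp, hq])
  have hom : |r - dist b m| ≤ dist o m := by
    have := abs_dist_sub_le o m b
    rwa [dist_comm o b, hb, dist_comm m b] at this
  have hom_sq : (r - dist b m) ^ 2 ≤ dist o m ^ 2 := by
    rw [← sq_abs]
    exact pow_le_pow_left₀ (abs_nonneg _) hom 2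
  rw [dist_comm o, hp] at ho_apollonius
  rw [dist_comm b p] at hb_apollonius
  linear_combination hb_apollonius - ho_apollonius + hom_sq

end Geometry

theorem circular_segment_height_lower_bound_general
    (lam R Δ : ℝ)
    (hΔ : 0 < Δ) (hRΔ : R ≤ Δ / Real.sqrt 3)
    (o b P Q : EuclideanSpace ℝ (Fin 2))
    (hb : ‖b - o‖ = R) (hP : ‖P - o‖ = R) (hQ : ‖Q - o‖ = R)
    (hPb : ‖P - b‖ = lam / 8) (hQb : ‖Q - b‖ = lam / 8) :
    Real.sqrt 3 * lam ^ 2 / (64 * Real.pi * Δ) ≤ ‖b - midpoint ℝ P Q‖ := by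
  simp only [← dist_eq_norm] at hb hP hQ hPb hQb ⊢
  set h := dist b (midpoint ℝ P Q)
  have hchord : (lam / 8) ^ 2 ≤ 2 * R * h := by
    rw [← hPb]
    exact dist_sq_le_two_mul_radius_mul_dist_midpoint hb hP hQ (hPb.trans hQb.symm)
  have hsqrt3 : 0 < Real.sqrt 3 := by positivity
  have hRΔ' : Real.sqrt 3 * R ≤ Δ := by
    rw [le_div_iff₀ hsqrt3] at hRΔ
    linarith
  have hh : 0 ≤ h := dist_nonneg
  rw [div_le_iff₀ (by positivity)]
  calc Real.sqrt 3 * lam ^ 2 = 128 * (Real.sqrt 3 * (lam / 8) ^ 2 / 2) := by ring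
    _ ≤ 128 * (Real.sqrt 3 * R * h) := by linear_combination 64 * Real.sqrt 3 * hchord
    _ ≤ 128 * (Δ * h) := by gcongr
    _ ≤ h * (64 * Real.pi * Δ) := by nlinarith [Real.pi_gt_three, mul_nonneg hΔ.le hh]

/-- Lower bound on the height of the circular segment of chord length λ/4
of a circle of radius R ≤ Δ/√3. -/
theorem circular_segment_height_lower_bound
    (lam R Δ : ℝ) (hlam0 : 0 < lam) (hlam1 : lam ≤ 1)
    (hR : 0 < R) (hΔ : 0 < Δ) (hRΔ : R ≤ Δ / Real.sqrt 3)
    (o b P Q : EuclideanSpace ℝ (Fin 2))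
    (hb : ‖b - o‖ = R) (hP : ‖P - o‖ = R) (hQ : ‖Q - o‖ = R)
    (hPb : ‖P - b‖ = lam / 8) (hQb : ‖Q - b‖ = lam / 8) (hPQ : P ≠ Q) :
    Real.sqrt 3 * lam ^ 2 / (64 * Real.pi * Δ) ≤ ‖b - midpoint ℝ P Q‖ :=
  circular_segment_height_lower_bound_general lam R Δ hΔ hRΔ o b P Q hb hP hQ hPb hQb
end

section
/- Let 0 < λ ≤ 1, o ∈ ℝ², R > 0, let u ∈ ℝ² be a unit vector, and let h > 0. Suppose the circular segment C = {z ∈ ℝ² : ‖z − o‖ ≤ R and ⟨z − o, u⟩ ≥ R − h} has diameter at most λ/4. Then for all a, b in the closed ball of radius R around o with ‖a − b‖ > λ/4, the midpoint m = (a + b)/2 lies outside the half-height segment, i.e., ⟨m − o, u⟩ < R − h/2. In particular, if a robot's target point is the midpoint of a line segment of length greater than λ/4 contained in the closed ball of radius R around o, that target point lies outside the circular segment of height h/2 in direction u. -/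
/-!
Every point of the disk has height at most `R` in direction `u`, so if the average height of
`a` and `b` is at least `R - h / 2`, each of them has height at least `R - h`. Then both lie in
the segment of height `h`, and `‖a - b‖` is bounded by its diameter.
-/

open scoped RealInnerProductSpace

section CircularSegment

variable {E : Type*} [NormedAddCommGroup E] [InnerProductSpace ℝ E]

def circularSegment (o : E) (R : ℝ) (u : E) (h : ℝ) : Set E :=
  {z | ‖z - o‖ ≤ R ∧ R - h ≤ ⟪z - o, u⟫}

theorem circularSegment_subset_closedBall (o : E) (R : ℝ) (u : E) (h : ℝ) :
    circularSegment o R u h ⊆ Metric.closedBall o R := fun _ hz =>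
  mem_closedBall_iff_norm.mpr hz.1

theorem isBounded_circularSegment (o : E) (R : ℝ) (u : E) (h : ℝ) :
    Bornology.IsBounded (circularSegment o R u h) :=
  Metric.isBounded_closedBall.subset (circularSegment_subset_closedBall o R u h)

theorem inner_sub_le_of_mem_closedBall {o z u : E} {R : ℝ} (hz : z ∈ Metric.closedBall o R)
    (hu : ‖u‖ = 1) : ⟪z - o, u⟫ ≤ R :=
  calc ⟪z - o, u⟫ ≤ ‖z - o‖ * ‖u‖ := real_inner_le_norm _ _
    _ ≤ R := by rw [hu, mul_one]; exact mem_closedBall_iff_norm.mp hz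

theorem inner_midpoint_sub (a b o u : E) :
    ⟪midpoint ℝ a b - o, u⟫ = (⟪a - o, u⟫ + ⟪b - o, u⟫) / 2 := by
  have hm : midpoint ℝ a b - o = (2 : ℝ)⁻¹ • ((a - o) + (b - o)) := by
    rw [midpoint_eq_smul_add, invOf_eq_inv]
    module
  rw [hm, real_inner_smul_left, inner_add_left]
  ring

theorem mem_circularSegment_of_inner_midpoint_sub_ge {o a b u : E} {R h : ℝ}
    (ha : a ∈ Metric.closedBall o R) (hb : b ∈ Metric.closedBall o R) (hu : ‖u‖ = 1)
    (hm : R - h / 2 ≤ ⟪midpoint ℝ a b - o, u⟫) :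
    a ∈ circularSegment o R u h ∧ b ∈ circularSegment o R u h := by
  rw [inner_midpoint_sub] at hm
  have hau := inner_sub_le_of_mem_closedBall ha hu
  have hbu := inner_sub_le_of_mem_closedBall hb hu
  exact ⟨⟨mem_closedBall_iff_norm.mp ha, by linarith⟩,
    ⟨mem_closedBall_iff_norm.mp hb, by linarith⟩⟩

end CircularSegment

theorem midpoint_outside_half_height_segment_general
    (lam : ℝ)
    (o : EuclideanSpace ℝ (Fin 2)) (R : ℝ)
    (u : EuclideanSpace ℝ (Fin 2)) (hu : ‖u‖ = 1) (h : ℝ)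
    (hdiam : Metric.diam {z : EuclideanSpace ℝ (Fin 2) |
      ‖z - o‖ ≤ R ∧ R - h ≤ ⟪z - o, u⟫} ≤ lam / 4) :
    ∀ a ∈ Metric.closedBall o R, ∀ b ∈ Metric.closedBall o R,
      lam / 4 < ‖a - b‖ → ⟪midpoint ℝ a b - o, u⟫ < R - h / 2 := by
  intro a ha b hb hab
  by_contra! hm
  obtain ⟨haC, hbC⟩ := mem_circularSegment_of_inner_midpoint_sub_ge ha hb hu hm
  have hdist := Metric.dist_le_diam_of_mem (isBounded_circularSegment o R u h) haC hbC
  rw [dist_eq_norm] at hdist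
  exact hab.not_ge (hdist.trans hdiam)

/-- If the circular segment of height h has diameter at most λ/4, then the
midpoint of any segment in the disk of length greater than λ/4 lies outside the
circular segment of height h/2. -/
theorem midpoint_outside_half_height_segment
    (lam : ℝ) (hlam0 : 0 < lam) (hlam1 : lam ≤ 1)
    (o : EuclideanSpace ℝ (Fin 2)) (R : ℝ) (hR : 0 < R)
    (u : EuclideanSpace ℝ (Fin 2)) (hu : ‖u‖ = 1) (h : ℝ) (hh : 0 < h)
    (hdiam : Metric.diam {z : EuclideanSpace ℝ (Fin 2) |
      ‖z - o‖ ≤ R ∧ R - h ≤ ⟪z - o, u⟫} ≤ lam / 4) :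
    ∀ a ∈ Metric.closedBall o R, ∀ b ∈ Metric.closedBall o R,
      lam / 4 < ‖a - b‖ → ⟪midpoint ℝ a b - o, u⟫ < R - h / 2 :=
  midpoint_outside_half_height_segment_general lam o R u hu h hdiam
end

section
/- Let n ≥ 1, 0 < λ ≤ 1, and let x : ℕ → Fin n → ℝ² be a λ-gathering trajectory of n robots in ℝ² with viewing range 1. Let Δ be the diameter of the initial configuration, and for each round s let R(s) be the radius of the smallest enclosing circle of {x s i : i ∈ Fin n}. Then for every round t in which the diameter of {x t i : i ∈ Fin n} is at least 1/2, one has R(t+2) ≤ R(t) − (√3·λ³)/(256·π·Δ). -/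
/-!
Let `B(c, R)` be the smallest enclosing ball in round `t`; then `R ≥ 1/4`, and `R ≤ Δ` because
the robots never leave the convex hull of the initial configuration. Every new position is the
midpoint of a chord lying in `B`, and by Apollonius a chord of length `ℓ` has its midpoint at
depth at least `ℓ² / (8R)`.

Consider robot `i` in round `t + 1`, whose neighbourhood has diameter `D > 0` (by connectivity,
unless the whole swarm has already collapsed to a point). If `D ≥ 1/2`, its chord has length
`≥ λ/2`. Otherwise, of its neighbours, those whose neighbourhood in round `t` had diameter
`< 1/4` all merged into one point `q` by the collapse rule, while all others reached depth
`δ = λ² / (128 R)`. The chord of length `λD` lies in the convex hull of `q` and these deep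
points, on which the convex function `dist · c + (δ / D) · dist · q` is at most `R`; hence its
midpoint has depth at least `λδ / 2`. In both cases `R (t + 2) ≤ R - λ³ / (256 R)`, which is
at least the claimed decrease since `√3 ≤ π`.
-/

open Metric Set

section Geometry

variable {E : Type*}

theorem dist_midpoint_le_sub_sq_div [NormedAddCommGroup E] [InnerProductSpace ℝ E]
    {a b c : E} {R : ℝ} (ha : dist a c ≤ R) (hb : dist b c ≤ R) :
    dist (midpoint ℝ a b) c ≤ R - dist a b ^ 2 / (8 * R) := by
  have apollonius :=
    EuclideanGeometry.dist_sq_add_dist_sq_eq_two_mul_dist_midpoint_sq_add_half_dist_sq c a b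
  rw [dist_comm c a, dist_comm c b, dist_comm c] at apollonius
  have hab : dist a b ≤ 2 * R := (dist_triangle_right a b c).trans (by linarith)
  have hm := dist_nonneg (x := midpoint ℝ a b) (y := c)
  rcases (dist_nonneg.trans ha).eq_or_lt with rfl | hR
  · have hab0 : dist a b = 0 := le_antisymm (by linarith) dist_nonneg
    rw [hab0]
    nlinarith [dist_nonneg (x := a) (y := c), dist_nonneg (x := b) (y := c)]
  · have hsq : 4 * dist (midpoint ℝ a b) c ^ 2 + dist a b ^ 2 ≤ 4 * R ^ 2 := by
      nlinarith [mul_le_mul ha ha dist_nonneg hR.le, mul_le_mul hb hb dist_nonneg hR.le]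
    have hd : dist a b ^ 2 ≤ 8 * R ^ 2 := by nlinarith [dist_nonneg (x := a) (y := b)]
    have key : 8 * R * dist (midpoint ℝ a b) c ≤ 8 * R ^ 2 - dist a b ^ 2 := by
      rw [← pow_le_pow_iff_left₀ (by positivity) (by linarith) two_ne_zero]
      nlinarith [sq_nonneg (dist a b ^ 2)]
    rw [le_sub_iff_add_le, ← le_sub_iff_add_le', div_le_iff₀ (by positivity)]
    linarith

theorem dist_midpoint_le_of_mem_convexHull_insert [SeminormedAddCommGroup E] [NormedSpace ℝ E]
    {a b c q : E} {K : Set E} {R δ D lam : ℝ} (hδ : 0 ≤ δ) (hD : 0 < D) (hq : dist q c ≤ R)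
    (hK : ∀ z ∈ K, dist z c ≤ R - δ ∧ dist z q ≤ D)
    (ha : a ∈ convexHull ℝ (insert q K)) (hb : b ∈ convexHull ℝ (insert q K))
    (hab : lam * D ≤ dist a b) :
    dist (midpoint ℝ a b) c ≤ R - lam * δ / 2 := by
  have hsub : convexHull ℝ (insert q K) ⊆ {p | dist p c + δ / D * dist p q ≤ R} := by
    refine convexHull_min ?_ ?_
    · rintro z (rfl | hz)
      · simpa using hq
      · obtain ⟨hzc, hzq⟩ := hK z hz
        have : δ / D * dist z q ≤ δ := by
          rw [div_mul_eq_mul_div, div_le_iff₀ hD]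
          exact mul_le_mul_of_nonneg_left hzq hδ
        show dist z c + δ / D * dist z q ≤ R
        linarith
    · simpa using ((convexOn_dist c convex_univ).add
        ((convexOn_dist q convex_univ).smul (div_nonneg hδ hD.le))).convex_le R
  have hmid : dist (midpoint ℝ a b) c ≤ (dist a c + dist b c) / 2 := by
    simpa only [midpoint_self] using dist_midpoint_midpoint_le a b c c
  have hlam : lam * δ ≤ δ / D * (dist a q + dist b q) := by
    calc lam * δ = δ / D * (lam * D) := by field_simp
      _ ≤ δ / D * (dist a q + dist b q) :=
        mul_le_mul_of_nonneg_left (hab.trans (dist_triangle_right a b q)) (div_nonneg hδ hD.le)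
  have ha' : dist a c + δ / D * dist a q ≤ R := hsub ha
  have hb' : dist b c + δ / D * dist b q ≤ R := hsub hb
  linarith

end Geometry

namespace Gathering

variable {ι E : Type*}

section Metric

variable [PseudoMetricSpace E]

def nbhd (p : ι → E) (i : ι) : Set ι := {j | dist (p j) (p i) ≤ 1}

def unitDiskGraph (p : ι → E) : SimpleGraph ι :=
  SimpleGraph.fromRel fun i j => dist (p i) (p j) ≤ 1

/-- Rule (iii) of a λ-gathering trajectory, for the round from `p` to `p'`. -/
def MergesSmallNbhds (p p' : ι → E) : Prop :=
  ∀ i j, nbhd p i = nbhd p j → diam (p '' nbhd p i) ≤ 1 / 2 → p' i = p' j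

variable {p : ι → E}

theorem mem_nbhd_self (i : ι) : i ∈ nbhd p i := by simp [nbhd]

theorem dist_le_diam_nbhd [Finite ι] {i j : ι} (hj : j ∈ nbhd p i) :
    dist (p j) (p i) ≤ diam (p '' nbhd p i) :=
  dist_le_diam_of_mem (toFinite _).isBounded ⟨j, hj, rfl⟩ ⟨i, mem_nbhd_self i, rfl⟩

theorem eq_of_preconnected_unitDiskGraph (hG : (unitDiskGraph p).Preconnected) {i : ι}
    (hi : ∀ j ∈ nbhd p i, p j = p i) (j : ι) : p j = p i := by
  induction (SimpleGraph.reachable_iff_reflTransGen i j).1 (hG i j) with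
  | refl => rfl
  | tail _ hadj ih =>
    obtain ⟨-, h | h⟩ := hadj
    · exact hi _ (by rwa [nbhd, mem_ofPred_eq, ← ih, dist_comm])
    · exact hi _ (by rwa [nbhd, mem_ofPred_eq, ← ih])

end Metric

theorem diam_nbhd_pos [MetricSpace E] {p : ι → E} [Finite ι]
    (hG : (unitDiskGraph p).Preconnected) (hp : ∃ j k, p j ≠ p k) (i : ι) :
    0 < diam (p '' nbhd p i) := by
  refine diam_nonneg.lt_of_ne fun h0 => ?_
  have hi : ∀ j ∈ nbhd p i, p j = p i := fun j hj =>
    dist_le_zero.1 (h0 ▸ dist_le_diam_nbhd hj)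
  obtain ⟨j, k, hjk⟩ := hp
  exact hjk ((eq_of_preconnected_unitDiskGraph hG hi j).trans
    (eq_of_preconnected_unitDiskGraph hG hi k).symm)

section Normed

variable [SeminormedAddCommGroup E] [NormedSpace ℝ E]

/-- Rule (i) of a λ-gathering trajectory, for the round from `p` to `p'`. -/
def IsMove (lam : ℝ) (p p' : ι → E) : Prop :=
  ∀ i, ∃ a b : E, segment ℝ a b ⊆ convexHull ℝ (p '' nbhd p i) ∧
    dist a b = lam * diam (p '' nbhd p i) ∧ p' i = midpoint ℝ a b

variable {lam : ℝ} {p p' : ι → E}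

theorem IsMove.mem_convexHull (h : IsMove lam p p') (i : ι) :
    p' i ∈ convexHull ℝ (p '' nbhd p i) := by
  obtain ⟨a, b, hseg, -, hi⟩ := h i
  exact hi ▸ hseg (midpoint_mem_segment a b)

theorem IsMove.range_subset_convexHull (h : IsMove lam p p') :
    range p' ⊆ convexHull ℝ (range p) := by
  rintro _ ⟨i, rfl⟩
  exact convexHull_mono (image_subset_range _ _) (h.mem_convexHull i)

theorem IsMove.dist_le (h : IsMove lam p p') {i : ι} {c : E} {r : ℝ}
    (hr : ∀ j ∈ nbhd p i, dist (p j) c ≤ r) : dist (p' i) c ≤ r := by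
  have hball : p '' nbhd p i ⊆ closedBall c r := by
    rintro _ ⟨j, hj, rfl⟩
    exact hr j hj
  exact convexHull_min hball (convex_closedBall c r) (h.mem_convexHull i)

theorem IsMove.dist_le_diam [Finite ι] (h : IsMove lam p p') (i : ι) :
    dist (p' i) (p i) ≤ diam (p '' nbhd p i) :=
  h.dist_le fun _ => dist_le_diam_nbhd

theorem diam_range_le_of_isMove [Finite ι] {x : ℕ → ι → E}
    (h : ∀ t, IsMove lam (x t) (x (t + 1))) (t : ℕ) :
    diam (range (x t)) ≤ diam (range (x 0)) := by
  have hsub : ∀ t, range (x t) ⊆ convexHull ℝ (range (x 0)) := by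
    intro t
    induction t with
    | zero => exact subset_convexHull ℝ _
    | succ t ih =>
      exact (h t).range_subset_convexHull.trans (convexHull_min ih (convex_convexHull ℝ _))
  calc diam (range (x t))
      ≤ diam (convexHull ℝ (range (x 0))) :=
        diam_mono (hsub t) (isBounded_convexHull.2 (finite_range _).isBounded)
    _ = diam (range (x 0)) := convexHull_diam _

theorem MergesSmallNbhds.eq [Finite ι] (hmerge : MergesSmallNbhds p p') (hm : IsMove lam p p')
    {ε : ℝ} (hε : ε ≤ 1 / 2) {j k : ι} (hj : diam (p '' nbhd p j) ≤ ε)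
    (hk : diam (p '' nbhd p k) ≤ ε) (hjk : dist (p' j) (p' k) ≤ 1 - 2 * ε) :
    p' j = p' k := by
  have hjk₀ : dist (p j) (p k) ≤ 1 := by
    calc dist (p j) (p k) ≤ dist (p' j) (p j) + dist (p' j) (p' k) + dist (p' k) (p k) := by
          rw [dist_comm (p' j)]; exact dist_triangle4 _ _ _ _
      _ ≤ 1 := by linarith [hm.dist_le_diam j, hm.dist_le_diam k]
  have hk_mem : k ∈ nbhd p j := by rwa [nbhd, mem_ofPred_eq, dist_comm]
  have hkj : dist (p k) (p j) ≤ ε := (dist_le_diam_nbhd hk_mem).trans hj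
  have hsub : ∀ {u v : ι}, diam (p '' nbhd p u) ≤ ε → dist (p v) (p u) ≤ ε →
      nbhd p u ⊆ nbhd p v := by
    intro u v hu huv r hr
    exact (dist_triangle (p r) (p u) (p v)).trans <| by
      linarith [(dist_le_diam_nbhd hr).trans hu, dist_comm (p u) (p v)]
  exact hmerge j k ((hsub hj hkj).antisymm (hsub hk (by rwa [dist_comm]))) (hj.trans hε)

end Normed

section InnerProduct

variable [NormedAddCommGroup E] [InnerProductSpace ℝ E] {lam : ℝ} {p p' p'' : ι → E}

theorem IsMove.dist_le_sub_of_le_diam (h : IsMove lam p p') (hlam : 0 ≤ lam) {i : ι} {c : E}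
    {R θ : ℝ} (hθ : 0 ≤ θ) (hball : ∀ j ∈ nbhd p i, dist (p j) c ≤ R)
    (hθD : θ ≤ diam (p '' nbhd p i)) :
    dist (p' i) c ≤ R - (lam * θ) ^ 2 / (8 * R) := by
  obtain ⟨a, b, hseg, hab, hi⟩ := h i
  have hhull : convexHull ℝ (p '' nbhd p i) ⊆ closedBall c R := by
    refine convexHull_min ?_ (convex_closedBall c R)
    rintro _ ⟨j, hj, rfl⟩
    exact hball j hj
  have ha : dist a c ≤ R := hhull (hseg (left_mem_segment ℝ a b))
  have hb : dist b c ≤ R := hhull (hseg (right_mem_segment ℝ a b))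
  have hchord : (lam * θ) ^ 2 ≤ dist a b ^ 2 := by
    rw [hab]
    gcongr
  rw [hi]
  refine (dist_midpoint_le_sub_sq_div ha hb).trans (sub_le_sub_left ?_ R)
  exact div_le_div_of_nonneg_right hchord (by linarith [dist_nonneg.trans ha])

variable [Finite ι]

theorem IsMove.exists_forall_eq_or_dist_le (hm : IsMove lam p p')
    (hmerge : MergesSmallNbhds p p') (hlam : 0 ≤ lam) {c : E} {R : ℝ}
    (hball : ∀ j, dist (p j) c ≤ R) {i : ι}
    (hsmall : diam (p' '' nbhd p' i) ≤ 1 / 2) :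
    ∃ k ∈ nbhd p' i, ∀ j ∈ nbhd p' i, p' j = p' k ∨ dist (p' j) c ≤ R - lam ^ 2 / (128 * R) := by
  have deep : ∀ j, 1 / 4 ≤ diam (p '' nbhd p j) → dist (p' j) c ≤ R - lam ^ 2 / (128 * R) := by
    intro j hj
    convert hm.dist_le_sub_of_le_diam hlam (by norm_num) (fun k _ => hball k) hj using 2
    ring
  have hclose : ∀ {j k}, j ∈ nbhd p' i → k ∈ nbhd p' i →
      dist (p' j) (p' k) ≤ 1 - 2 * (1 / 4) := by
    intro j k hj hk
    have := dist_le_diam_of_mem (s := p' '' nbhd p' i) (toFinite _).isBounded ⟨j, hj, rfl⟩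
      ⟨k, hk, rfl⟩
    linarith
  by_cases hshallow : ∃ k ∈ nbhd p' i, diam (p '' nbhd p k) < 1 / 4
  · obtain ⟨k, hk, hk4⟩ := hshallow
    refine ⟨k, hk, fun j hj => ?_⟩
    rcases lt_or_ge (diam (p '' nbhd p j)) (1 / 4) with hj4 | hj4
    · exact Or.inl (hmerge.eq hm (by norm_num) hj4.le hk4.le (hclose hj hk))
    · exact Or.inr (deep j hj4)
  · push Not at hshallow
    exact ⟨i, mem_nbhd_self i, fun j hj => Or.inr (deep j (hshallow j hj))⟩

theorem IsMove.dist_two_rounds_le (hm : IsMove lam p p') (hm' : IsMove lam p' p'')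
    (hmerge : MergesSmallNbhds p p') (hG : (unitDiskGraph p').Preconnected)
    (hp' : ∃ j k, p' j ≠ p' k) (hlam0 : 0 ≤ lam) (hlam1 : lam ≤ 1) {c : E} {R : ℝ}
    (hball : ∀ j, dist (p j) c ≤ R) (i : ι) :
    dist (p'' i) c ≤ R - lam ^ 3 / (256 * R) := by
  have hR : 0 ≤ R := dist_nonneg.trans (hball i)
  have hball' : ∀ j, dist (p' j) c ≤ R := fun j => hm.dist_le fun k _ => hball k
  rcases le_or_gt (1 / 2) (diam (p' '' nbhd p' i)) with hbig | hsmall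
  · calc dist (p'' i) c ≤ R - (lam * (1 / 2)) ^ 2 / (8 * R) :=
          hm'.dist_le_sub_of_le_diam hlam0 (by norm_num) (fun j _ => hball' j) hbig
      _ ≤ R - lam ^ 3 / (256 * R) := by
          rw [show (lam * (1 / 2)) ^ 2 / (8 * R) = 8 * lam ^ 2 / (256 * R) by ring]
          gcongr
          nlinarith
  · obtain ⟨k, hk, hmerged⟩ := hm.exists_forall_eq_or_dist_le hmerge hlam0 hball hsmall.le
    set δ := lam ^ 2 / (128 * R)
    set S := p' '' nbhd p' i
    have hSK : S ⊆ insert (p' k) {z ∈ S | dist z c ≤ R - δ} := by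
      rintro _ ⟨j, hj, rfl⟩
      rcases hmerged j hj with h | h
      · exact h ▸ mem_insert _ _
      · exact mem_insert_of_mem _ ⟨⟨j, hj, rfl⟩, h⟩
    have hK : ∀ z ∈ {z ∈ S | dist z c ≤ R - δ}, dist z c ≤ R - δ ∧ dist z (p' k) ≤ diam S :=
      fun z hz => ⟨hz.2, dist_le_diam_of_mem (toFinite _).isBounded hz.1 ⟨k, hk, rfl⟩⟩
    obtain ⟨a, b, hseg, hab, hi⟩ := hm' i
    have hhull := convexHull_mono (𝕜 := ℝ) hSK
    calc dist (p'' i) c ≤ R - lam * δ / 2 := hi ▸ dist_midpoint_le_of_mem_convexHull_insert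
          (by positivity) (diam_nbhd_pos hG hp' i) (hball' k) hK
          (hhull (hseg (left_mem_segment ℝ a b))) (hhull (hseg (right_mem_segment ℝ a b))) hab.ge
      _ = R - lam ^ 3 / (256 * R) := by ring

end InnerProduct

end Gathering

open Gathering

theorem sec_radius_decrease_2D_general
    (n : ℕ) (lam : ℝ) (hlam0 : 0 < lam) (hlam1 : lam ≤ 1)
    (x : ℕ → Fin n → EuclideanSpace ℝ (Fin 2))
    (hmove : ∀ (t : ℕ) (i : Fin n), ∃ a b : EuclideanSpace ℝ (Fin 2),
      segment ℝ a b ⊆ convexHull ℝ (x t '' {j | dist (x t j) (x t i) ≤ 1}) ∧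
      dist a b = lam * Metric.diam (x t '' {j | dist (x t j) (x t i) ≤ 1}) ∧
      x (t + 1) i = midpoint ℝ a b)
    (hconn : ∀ t : ℕ,
      (SimpleGraph.fromRel (fun i j : Fin n => dist (x t i) (x t j) ≤ 1)).Connected)
    (hcollapse : ∀ (t : ℕ) (i j : Fin n),
      {k | dist (x t k) (x t i) ≤ 1} = {k | dist (x t k) (x t j) ≤ 1} →
      Metric.diam (x t '' {k | dist (x t k) (x t i) ≤ 1}) ≤ 1 / 2 →
      x (t + 1) i = x (t + 1) j)
    -- c s, R s are center and radius of the smallest enclosing circle in round s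
    (c : ℕ → EuclideanSpace ℝ (Fin 2)) (R : ℕ → ℝ)
    (hball : ∀ (s : ℕ) (i : Fin n), x s i ∈ Metric.closedBall (c s) (R s))
    (hmin : ∀ (s : ℕ) (c' : EuclideanSpace ℝ (Fin 2)) (r' : ℝ), 0 ≤ r' →
      (∀ i : Fin n, x s i ∈ Metric.closedBall c' r') → R s ≤ r')
    (t : ℕ) (hdiam : 1 / 2 ≤ Metric.diam (Set.range (x t))) :
    R (t + 2) ≤ R t -
      Real.sqrt 3 * lam ^ 3 / (256 * Real.pi * Metric.diam (Set.range (x 0))) := by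
  obtain ⟨_, i₀, -⟩ : (range (x t)).Nonempty := by
    by_contra h
    rw [not_nonempty_iff_eq_empty.1 h, diam_empty] at hdiam
    norm_num at hdiam
  have hR : 1 / 4 ≤ R t := by
    have := (diam_mono (range_subset_iff.2 (hball t)) isBounded_closedBall).trans
      (diam_closedBall (dist_nonneg.trans (hball t i₀)))
    linarith
  have hRΔ : R t ≤ diam (range (x 0)) := by
    refine (hmin t (x t i₀) _ diam_nonneg fun i => ?_).trans (diam_range_le_of_isMove hmove t)
    exact dist_le_diam_of_mem (finite_range _).isBounded ⟨i, rfl⟩ ⟨i₀, rfl⟩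
  have hgain : Real.sqrt 3 * lam ^ 3 / (256 * Real.pi * diam (range (x 0)))
      ≤ lam ^ 3 / (256 * R t) := by
    have hsqrt3 : Real.sqrt 3 ≤ Real.pi :=
      Real.sqrt_le_iff.2 ⟨Real.pi_pos.le, by nlinarith [Real.pi_gt_three]⟩
    calc Real.sqrt 3 * lam ^ 3 / (256 * Real.pi * diam (range (x 0)))
        ≤ Real.pi * lam ^ 3 / (256 * Real.pi * diam (range (x 0))) := by gcongr
      _ = lam ^ 3 / (256 * diam (range (x 0))) := by field_simp
      _ ≤ lam ^ 3 / (256 * R t) := by gcongr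
  have hgain_le : lam ^ 3 / (256 * R t) ≤ R t := by
    rw [div_le_iff₀ (by linarith)]
    nlinarith [pow_le_one₀ hlam0.le hlam1 (n := 3)]
  by_cases hconst : ∀ j, x (t + 1) j = x (t + 1) i₀
  · have : R (t + 2) ≤ 0 := hmin (t + 2) (x (t + 1) i₀) 0 le_rfl fun i =>
      IsMove.dist_le (hmove (t + 1)) fun j _ => by rw [hconst j, dist_self]
    linarith
  · push Not at hconst
    obtain ⟨j, hj⟩ := hconst
    have := hmin (t + 2) (c t) _ (by linarith) fun i =>
      IsMove.dist_two_rounds_le (hmove t) (hmove (t + 1)) (hcollapse t)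
        (hconn (t + 1)).preconnected ⟨j, i₀, hj⟩ hlam0.le hlam1 (hball t) i
    linarith

/-- For a λ-gathering trajectory in ℝ², the radius of the global smallest
enclosing circle decreases by at least √3·λ³/(256·π·Δ) every two rounds as long as the
diameter is at least 1/2. -/
theorem sec_radius_decrease_2D
    (n : ℕ) (hn : 1 ≤ n) (lam : ℝ) (hlam0 : 0 < lam) (hlam1 : lam ≤ 1)
    (x : ℕ → Fin n → EuclideanSpace ℝ (Fin 2))
    (hmove : ∀ (t : ℕ) (i : Fin n), ∃ a b : EuclideanSpace ℝ (Fin 2),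
      segment ℝ a b ⊆ convexHull ℝ (x t '' {j | dist (x t j) (x t i) ≤ 1}) ∧
      dist a b = lam * Metric.diam (x t '' {j | dist (x t j) (x t i) ≤ 1}) ∧
      x (t + 1) i = midpoint ℝ a b)
    (hconn : ∀ t : ℕ,
      (SimpleGraph.fromRel (fun i j : Fin n => dist (x t i) (x t j) ≤ 1)).Connected)
    (hcollapse : ∀ (t : ℕ) (i j : Fin n),
      {k | dist (x t k) (x t i) ≤ 1} = {k | dist (x t k) (x t j) ≤ 1} →
      Metric.diam (x t '' {k | dist (x t k) (x t i) ≤ 1}) ≤ 1 / 2 →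
      x (t + 1) i = x (t + 1) j)
    -- c s, R s are center and radius of the smallest enclosing circle in round s
    (c : ℕ → EuclideanSpace ℝ (Fin 2)) (R : ℕ → ℝ) (hR0 : ∀ s : ℕ, 0 ≤ R s)
    (hball : ∀ (s : ℕ) (i : Fin n), x s i ∈ Metric.closedBall (c s) (R s))
    (hmin : ∀ (s : ℕ) (c' : EuclideanSpace ℝ (Fin 2)) (r' : ℝ), 0 ≤ r' →
      (∀ i : Fin n, x s i ∈ Metric.closedBall c' r') → R s ≤ r')
    (t : ℕ) (hdiam : 1 / 2 ≤ Metric.diam (Set.range (x t))) :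
    R (t + 2) ≤ R t -
      Real.sqrt 3 * lam ^ 3 / (256 * Real.pi * Metric.diam (Set.range (x 0))) :=
  sec_radius_decrease_2D_general n lam hlam0 hlam1 x hmove hconn hcollapse c R hball hmin t hdiam
end

section
/- Let d ≥ 1, let P ⊆ ℝ^d be a nonempty finite set, and let p ∈ P be such that ‖q − p‖ ≤ 1 for all q ∈ P. Let c ∈ ℝ^d and a ≥ 0 be the center and radius of the smallest enclosing ball of P, i.e., P ⊆ closedBall(c, a) and for every c' and a' with P ⊆ closedBall(c', a') one has a ≤ a'. Then a ≤ 1, and for every q ∈ P the midpoint (p + c)/2 lies within distance 1/2 of the midpoint (p + q)/2, i.e., ‖(p + c)/2 − (p + q)/2‖ ≤ 1/2. Consequently, a robot at position p whose visible neighbors P all lie within distance 1 may move the distance ‖p − c‖/2 towards c (i.e., to the point (p + c)/2) while remaining inside every ball of radius 1/2 centered at the midpoint between p and a neighbor q ∈ P. -/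
theorem dist_midpoint_midpoint_same_left_le {V : Type*} [SeminormedAddCommGroup V]
    [NormedSpace ℝ V] (p x y : V) :
    dist (midpoint ℝ p x) (midpoint ℝ p y) ≤ dist x y / 2 := by
  simpa using dist_midpoint_midpoint_le p x p y

theorem gtc_halfway_move_stays_in_limit_balls_general
    (d : ℕ)
    (P : Set (EuclideanSpace ℝ (Fin d)))
    (p : EuclideanSpace ℝ (Fin d))
    (hnear : ∀ q ∈ P, ‖q - p‖ ≤ 1)
    (c : EuclideanSpace ℝ (Fin d)) (a : ℝ)
    -- c, a are center and radius of the smallest enclosing ball of P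
    (hball : P ⊆ Metric.closedBall c a)
    (hmin : ∀ (c' : EuclideanSpace ℝ (Fin d)) (a' : ℝ), 0 ≤ a' →
      P ⊆ Metric.closedBall c' a' → a ≤ a') :
    a ≤ 1 ∧ ∀ q ∈ P, ‖midpoint ℝ p c - midpoint ℝ p q‖ ≤ 1 / 2 := by
  have ha : a ≤ 1 := hmin p 1 zero_le_one fun q hq =>
    Metric.mem_closedBall.2 (by rw [dist_eq_norm]; exact hnear q hq)
  refine ⟨ha, fun q hq => ?_⟩
  have hqc : dist c q ≤ a := by rw [dist_comm]; exact hball hq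
  rw [← dist_eq_norm]
  calc dist (midpoint ℝ p c) (midpoint ℝ p q) ≤ dist c q / 2 :=
        dist_midpoint_midpoint_same_left_le p c q
    _ ≤ 1 / 2 := by linarith

/-- The smallest enclosing ball of a point set of diameter-from-p at most 1
has radius at most 1, and moving halfway towards its center stays within every limit ball
of radius 1/2 centered at the midpoint towards a neighbor. -/
theorem gtc_halfway_move_stays_in_limit_balls
    (d : ℕ) (hd : 1 ≤ d)
    (P : Set (EuclideanSpace ℝ (Fin d))) (hPfin : P.Finite) (hPne : P.Nonempty)
    (p : EuclideanSpace ℝ (Fin d)) (hp : p ∈ P)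
    (hnear : ∀ q ∈ P, ‖q - p‖ ≤ 1)
    (c : EuclideanSpace ℝ (Fin d)) (a : ℝ) (ha : 0 ≤ a)
    -- c, a are center and radius of the smallest enclosing ball of P
    (hball : P ⊆ Metric.closedBall c a)
    (hmin : ∀ (c' : EuclideanSpace ℝ (Fin d)) (a' : ℝ), 0 ≤ a' →
      P ⊆ Metric.closedBall c' a' → a ≤ a') :
    a ≤ 1 ∧ ∀ q ∈ P, ‖midpoint ℝ p c - midpoint ℝ p q‖ ≤ 1 / 2 :=
  gtc_halfway_move_stays_in_limit_balls_general d P p hnear c a hball hmin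
end

section
/- Let d ≥ 1, n ≥ 1, V > 0, τ > 0, and let p : Fin n → ℝ^d be positions of n robots. Suppose the graph on Fin n with an edge between i and j whenever i ≠ j and ‖p i − p j‖ ≤ V is connected, and suppose the diameter of {p i : i ∈ Fin n} is greater than τ. Then for every robot i, the diameter of its neighborhood at viewing range V + τ is greater than τ; that is, there exist j, k with ‖p j − p i‖ ≤ V + τ, ‖p k − p i‖ ≤ V + τ, and ‖p j − p k‖ > τ. -/
/-! If some robot `c` is farther than `τ` from robot `i`, follow a path of the connectivity graph
from `c` to `i`: the last robot on it still farther than `τ` from `i` is adjacent to one within `τ`,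
so it lies within `V + τ` of `i`, and together with `i` it witnesses the claim. Otherwise every
robot lies within `τ` of `i`, and any pair of robots more than `τ` apart witnesses it. -/

open Metric Set

theorem exists_lt_dist_of_lt_diam_range {ι α : Type*} [PseudoMetricSpace α] {f : ι → α} {r : ℝ}
    (hr : 0 ≤ r) (h : r < diam (range f)) : ∃ a b, r < dist (f a) (f b) := by
  by_contra! hle
  refine h.not_ge (diam_le_of_forall_dist_le hr ?_)
  rintro _ ⟨a, rfl⟩ _ ⟨b, rfl⟩
  exact hle a b

section

variable {ι : Type*} {G : SimpleGraph ι}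

theorem SimpleGraph.Preconnected.exists_adj_mem_notMem (hG : G.Preconnected) {S : Set ι} {u v : ι}
    (hu : u ∈ S) (hv : v ∉ S) : ∃ x y, G.Adj x y ∧ x ∈ S ∧ y ∉ S := by
  obtain ⟨w⟩ := hG u v
  obtain ⟨d, -, hd⟩ := w.exists_boundary_dart S hu hv
  exact ⟨d.fst, d.snd, d.adj, hd⟩

theorem exists_lt_dist_le_add_of_preconnected {α : Type*} [PseudoMetricSpace α]
    (hG : G.Preconnected) {f : ι → α} {R r : ℝ} (hR : ∀ x y, G.Adj x y → dist (f x) (f y) ≤ R)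
    (hr : 0 ≤ r) {c : ι} (i : ι) (hc : r < dist (f c) (f i)) :
    ∃ j, r < dist (f j) (f i) ∧ dist (f j) (f i) ≤ R + r := by
  obtain ⟨x, y, hxy, hx, hy⟩ :=
    hG.exists_adj_mem_notMem (S := {j | r < dist (f j) (f i)}) (v := i) hc (by simpa using hr)
  refine ⟨x, hx, ?_⟩
  calc dist (f x) (f i) ≤ dist (f x) (f y) + dist (f y) (f i) := dist_triangle _ _ _
    _ ≤ R + r := add_le_add (hR x y hxy) (not_lt.mp hy)

end

theorem neighborhood_diameter_with_larger_viewing_range_general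
    (d n : ℕ)
    (V τ : ℝ) (hV : 0 < V) (hτ : 0 < τ)
    (p : Fin n → EuclideanSpace ℝ (Fin d))
    (hconn : (SimpleGraph.fromRel (fun i j : Fin n => dist (p i) (p j) ≤ V)).Connected)
    (hdiam : τ < Metric.diam (Set.range p)) :
    ∀ i : Fin n, ∃ j k : Fin n,
      dist (p j) (p i) ≤ V + τ ∧ dist (p k) (p i) ≤ V + τ ∧ τ < dist (p j) (p k) := by
  intro i
  by_cases hfar : ∃ c, τ < dist (p c) (p i)
  · obtain ⟨c, hc⟩ := hfar
    have hadj : ∀ x y, (SimpleGraph.fromRel fun i j : Fin n => dist (p i) (p j) ≤ V).Adj x y →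
        dist (p x) (p y) ≤ V := by
      rintro x y ⟨-, hxy | hyx⟩
      exacts [hxy, dist_comm (p x) (p y) ▸ hyx]
    obtain ⟨j, hjτ, hjV⟩ := 
      exists_lt_dist_le_add_of_preconnected hconn.preconnected hadj hτ.le i hc
    exact ⟨j, i, hjV, by simpa using add_nonneg hV.le hτ.le, hjτ⟩
  · push Not at hfar
    obtain ⟨a, b, hab⟩ := exists_lt_dist_of_lt_diam_range hτ.le hdiam
    have hτV : τ ≤ V + τ := le_add_of_nonneg_left hV.le
    exact ⟨a, b, (hfar a).trans hτV, (hfar b).trans hτV, hab⟩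

/-- If the connectivity graph with range V is connected and the global
diameter exceeds τ, then every robot's neighborhood at viewing range V + τ has diameter
greater than τ. -/
theorem neighborhood_diameter_with_larger_viewing_range
    (d n : ℕ) (hd : 1 ≤ d) (hn : 1 ≤ n)
    (V τ : ℝ) (hV : 0 < V) (hτ : 0 < τ)
    (p : Fin n → EuclideanSpace ℝ (Fin d))
    (hconn : (SimpleGraph.fromRel (fun i j : Fin n => dist (p i) (p j) ≤ V)).Connected)
    (hdiam : τ < Metric.diam (Set.range p)) :
    ∀ i : Fin n, ∃ j k : Fin n,
      dist (p j) (p i) ≤ V + τ ∧ dist (p k) (p i) ≤ V + τ ∧ τ < dist (p j) (p k) :=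
  neighborhood_diameter_with_larger_viewing_range_general d n V τ hV hτ p hconn hdiam
end

section
/- Let n ≥ 1, d ≥ 1, 0 < λ ≤ 1, and let x : ℕ → Fin n → ℝ^d be a λ-gathering trajectory of n robots in ℝ^d with viewing range 1. Let Δ be the diameter of the initial configuration, and for each round s let R(s) be the radius of the smallest enclosing hypersphere of {x s i : i ∈ Fin n}. Then for every round t in which the diameter of {x t i : i ∈ Fin n} is at least 1/2, one has R(t+2) ≤ R(t) − (√2·λ³)/(256·π·Δ). -/
/-!
Every robot moves inside the convex hull of what it sees, so the smallest enclosing ball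
`B(c, R)` of round `t` still encloses rounds `t + 1` and `t + 2`, and `R ≤ Δ`. A robot that ends a
round within `h = λ² / (128 R)` of the sphere moved to the midpoint of a chord of length `λ D` of
`B(c, R)` with a shallow midpoint, so `λ² D² < 8 R h` and the cluster it saw had diameter
`D < 1/4`. Two such robots ending up less than `1/4` apart therefore saw the same robots, and the
collapse rule put them at one point `P`. So a robot still shallow after round `t + 2` saw a
cluster which is `h`-deep except for `P`; on its hull `dist · c + (h / D) dist · P ≤ R` by
convexity, and the midpoint of its chord of length `λ D` lies at depth at least
`λ h / 2 = λ³ / (256 R) > √2 λ³ / (256 π Δ)`. A robot that sees nobody but its own position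
forces, by connectivity, complete gathering.
-/

open Metric Set

section MetricSpace

variable {ι E : Type*} [MetricSpace E]

/-- The index set `N_i` of the paper. -/
def neighbors (p : ι → E) (i : ι) : Set ι := {j | dist (p j) (p i) ≤ 1}

theorem self_mem_neighbors (p : ι → E) (i : ι) : i ∈ neighbors p i := by
  simp [neighbors]

theorem dist_le_diam_image_neighbors [Finite ι] {p : ι → E} {i j k : ι}
    (hj : j ∈ neighbors p i) (hk : k ∈ neighbors p i) :
    dist (p j) (p k) ≤ diam (p '' neighbors p i) :=
  dist_le_diam_of_mem (toFinite _).isBounded (mem_image_of_mem p hj) (mem_image_of_mem p hk)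

theorem neighbors_subset_of_diam_add_dist_le [Finite ι] {p : ι → E} {w w' : ι}
    (h : diam (p '' neighbors p w) + dist (p w) (p w') ≤ 1) :
    neighbors p w ⊆ neighbors p w' := fun k hk =>
  calc dist (p k) (p w') ≤ dist (p k) (p w) + dist (p w) (p w') := dist_triangle _ _ _
    _ ≤ diam (p '' neighbors p w) + dist (p w) (p w') := by
        gcongr
        exact dist_le_diam_image_neighbors hk (self_mem_neighbors p w)
    _ ≤ 1 := h

theorem eq_of_diam_image_neighbors_eq_zero [Finite ι] {p : ι → E} {i : ι}
    (hconn : (SimpleGraph.fromRel fun i j => dist (p i) (p j) ≤ 1).Connected)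
    (h0 : diam (p '' neighbors p i) = 0) (k : ι) : p k = p i := by
  have hreach := (SimpleGraph.reachable_iff_reflTransGen i k).1 (hconn.preconnected i k)
  induction hreach with
  | refl => rfl
  | @tail j l _ hadj ih =>
    have hl : l ∈ neighbors p i := by
      obtain ⟨-, hjl | hlj⟩ := (SimpleGraph.fromRel_adj _ _ _).1 hadj
      · simpa [neighbors, ← ih, dist_comm] using hjl
      · simpa [neighbors, ← ih] using hlj
    have := dist_le_diam_image_neighbors hl (self_mem_neighbors p i)
    rw [h0] at this
    exact dist_le_zero.1 this

theorem le_diam_range_of_forall_mem_closedBall_le [Finite ι] [Nonempty ι] {p : ι → E} {R : ℝ}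
    (hmin : ∀ c r, 0 ≤ r → (∀ i, p i ∈ closedBall c r) → R ≤ r) : R ≤ diam (range p) := by
  obtain ⟨i₀⟩ := ‹Nonempty ι›
  exact hmin (p i₀) _ diam_nonneg fun j =>
    dist_le_diam_of_mem (finite_range p).isBounded (mem_range_self j) (mem_range_self i₀)

end MetricSpace

section NormedSpace

variable {ι E : Type*} [NormedAddCommGroup E] [NormedSpace ℝ E]

theorem dist_add_mul_dist_le_of_mem_convexHull {s : Set E} {c P y : E} {κ r : ℝ} (hκ : 0 ≤ κ)
    (hs : ∀ v ∈ s, dist v c + κ * dist v P ≤ r) (hy : y ∈ convexHull ℝ s) :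
    dist y c + κ * dist y P ≤ r := by
  have hconv : ConvexOn ℝ univ fun z => dist z c + κ * dist z P :=
    (convexOn_univ_dist c).add ((convexOn_univ_dist P).smul hκ)
  have hsub : s ⊆ {z ∈ univ | dist z c + κ * dist z P ≤ r} := fun v hv => ⟨trivial, hs v hv⟩
  exact (convexHull_min hsub (hconv.convex_le r) hy).2

theorem dist_midpoint_le_of_mem_convexHull {s : Set E} {c P a b : E} {κ r : ℝ} (hκ : 0 ≤ κ)
    (hs : ∀ v ∈ s, dist v c + κ * dist v P ≤ r) (ha : a ∈ convexHull ℝ s)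
    (hb : b ∈ convexHull ℝ s) :
    dist (midpoint ℝ a b) c ≤ r - κ * dist a b / 2 := by
  have ha' := dist_add_mul_dist_le_of_mem_convexHull hκ hs ha
  have hb' := dist_add_mul_dist_le_of_mem_convexHull hκ hs hb
  have hmid : dist (midpoint ℝ a b) c ≤ (dist a c + dist b c) / 2 := by
    simpa using dist_midpoint_midpoint_le a b c c
  have hab : κ * dist a b ≤ κ * dist a P + κ * dist b P := by
    rw [← mul_add]
    exact mul_le_mul_of_nonneg_left (dist_triangle_right a b P) hκ
  linarith

/-- Condition (i) of a `λ`-gathering trajectory, for the round from `p` to `q`. -/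
def GatheringStep (lam : ℝ) (p q : ι → E) : Prop :=
  ∀ i, ∃ a b : E, segment ℝ a b ⊆ convexHull ℝ (p '' neighbors p i) ∧
    dist a b = lam * diam (p '' neighbors p i) ∧ q i = midpoint ℝ a b

namespace GatheringStep

variable {lam : ℝ} {p q : ι → E}

theorem mem_convexHull (hs : GatheringStep lam p q) (i : ι) :
    q i ∈ convexHull ℝ (p '' neighbors p i) := by
  obtain ⟨a, b, hseg, -, hq⟩ := hs i
  exact hq ▸ hseg (midpoint_mem_segment a b)

theorem mem_closedBall (hs : GatheringStep lam p q) {c : E} {r : ℝ}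
    (hp : ∀ j, p j ∈ closedBall c r) (i : ι) : q i ∈ closedBall c r :=
  convexHull_min (by rintro - ⟨j, -, rfl⟩; exact hp j) (convex_closedBall c r)
    (hs.mem_convexHull i)

theorem eq_of_forall_eq (hs : GatheringStep lam p q) {z : E} (hp : ∀ j, p j = z) (i : ι) :
    q i = z :=
  convexHull_min (by rintro - ⟨j, -, rfl⟩; exact hp j) (convex_singleton z)
    (hs.mem_convexHull i)

theorem diam_range_le [Finite ι] (hs : GatheringStep lam p q) :
    diam (range q) ≤ diam (range p) :=
  calc diam (range q) ≤ diam (convexHull ℝ (range p)) := by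
        refine diam_mono ?_ (isBounded_convexHull.2 (finite_range p).isBounded)
        rintro - ⟨i, rfl⟩
        exact convexHull_mono (image_subset_range _ _) (hs.mem_convexHull i)
    _ = diam (range p) := convexHull_diam _

theorem dist_le_diam [Finite ι] (hs : GatheringStep lam p q) (i : ι) :
    dist (q i) (p i) ≤ diam (p '' neighbors p i) := by
  have hball : p '' neighbors p i ⊆ closedBall (p i) (diam (p '' neighbors p i)) := by
    rintro - ⟨j, hj, rfl⟩
    exact dist_le_diam_image_neighbors hj (self_mem_neighbors p i)
  exact convexHull_min hball (convex_closedBall _ _) (hs.mem_convexHull i)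

theorem dist_le_of_forall_ne_dist_le [Finite ι] (hs : GatheringStep lam p q) {c P : E}
    {r h : ℝ} (hp : ∀ j, p j ∈ closedBall c r) (hh : 0 ≤ h) {i : ι}
    (hD : 0 < diam (p '' neighbors p i)) (hP : P ∈ p '' neighbors p i)
    (hdeep : ∀ v ∈ p '' neighbors p i, v ≠ P → dist v c ≤ r - h) :
    dist (q i) c ≤ r - lam * h / 2 := by
  set D := diam (p '' neighbors p i)
  obtain ⟨a, b, hseg, hab, hq⟩ := hs i
  have hs' : ∀ v ∈ p '' neighbors p i, dist v c + h / D * dist v P ≤ r := by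
    intro v hv
    by_cases hvP : v = P
    · obtain ⟨j, -, rfl⟩ := hv
      simpa [hvP] using hp j
    · have hvP' : dist v P ≤ D := dist_le_diam_of_mem (toFinite _).isBounded hv hP
      have : h / D * dist v P ≤ h := by
        rw [div_mul_eq_mul_div, div_le_iff₀ hD]
        exact mul_le_mul_of_nonneg_left hvP' hh
      linarith [hdeep v hv hvP]
  have := dist_midpoint_le_of_mem_convexHull (div_nonneg hh hD.le) hs'
    (hseg (left_mem_segment ℝ a b)) (hseg (right_mem_segment ℝ a b))
  rwa [← hq, hab, div_mul_eq_mul_div, mul_div_assoc, mul_div_cancel_right₀ _ hD.ne',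
    mul_comm h] at this

end GatheringStep

theorem diam_range_le_diam_range_zero [Finite ι] {lam : ℝ} {x : ℕ → ι → E}
    (hx : ∀ s, GatheringStep lam (x s) (x (s + 1))) (s : ℕ) :
    diam (range (x s)) ≤ diam (range (x 0)) := by
  induction s with
  | zero => exact le_rfl
  | succ s ih => exact (hx s).diam_range_le.trans ih

end NormedSpace

section InnerProductSpace

variable {ι E : Type*} [NormedAddCommGroup E] [InnerProductSpace ℝ E]

theorem dist_sq_lt_of_lt_dist_midpoint {a b c : E} {r e : ℝ} (ha : dist a c ≤ r)
    (hb : dist b c ≤ r) (he : e ≤ r) (hm : r - e < dist (midpoint ℝ a b) c) :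
    dist a b ^ 2 < 8 * r * e := by
  have apollonius :=
    EuclideanGeometry.dist_sq_add_dist_sq_eq_two_mul_dist_midpoint_sq_add_half_dist_sq c a b
  rw [dist_comm c a, dist_comm c b, dist_comm c] at apollonius
  have hm2 : (r - e) ^ 2 < dist (midpoint ℝ a b) c ^ 2 := by gcongr
  have ha2 : dist a c ^ 2 ≤ r ^ 2 := by gcongr
  have hb2 : dist b c ^ 2 ≤ r ^ 2 := by gcongr
  nlinarith

namespace GatheringStep

variable {lam : ℝ} {p q q' : ι → E}

theorem diam_lt_of_lt_dist (hs : GatheringStep lam p q) {c : E} {r h : ℝ}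
    (hp : ∀ j, p j ∈ closedBall c r) (hhr : h ≤ r) (hh : 128 * r * h ≤ lam ^ 2)
    {i : ι} (hi : r - h < dist (q i) c) : diam (p '' neighbors p i) < 1 / 4 := by
  obtain ⟨a, b, hseg, hab, hq⟩ := hs i
  have hball : convexHull ℝ (p '' neighbors p i) ⊆ closedBall c r :=
    convexHull_min (by rintro - ⟨j, -, rfl⟩; exact hp j) (convex_closedBall c r)
  have hchord := dist_sq_lt_of_lt_dist_midpoint (hball (hseg (left_mem_segment ℝ a b)))
    (hball (hseg (right_mem_segment ℝ a b))) hhr (hq ▸ hi)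
  rw [hab, mul_pow] at hchord
  have hsq : diam (p '' neighbors p i) ^ 2 < (1 / 4) ^ 2 := by
    refine lt_of_mul_lt_mul_left ?_ (sq_nonneg lam)
    nlinarith
  exact lt_of_pow_lt_pow_left₀ 2 (by norm_num) hsq

/-- Both robots saw clusters of diameter `< 1/4` from positions less than `3/4` apart, so they saw
the same robots and the collapse rule applies. -/
theorem eq_of_lt_dist [Finite ι] (hs : GatheringStep lam p q)
    (hcollapse : ∀ i j, neighbors p i = neighbors p j →
      diam (p '' neighbors p i) ≤ 1 / 2 → q i = q j)
    {c : E} {r h : ℝ} (hp : ∀ j, p j ∈ closedBall c r) (hhr : h ≤ r)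
    (hh : 128 * r * h ≤ lam ^ 2) {w w' : ι} (hw : r - h < dist (q w) c)
    (hw' : r - h < dist (q w') c) (hww' : dist (q w) (q w') < 1 / 4) : q w = q w' := by
  have hDw := hs.diam_lt_of_lt_dist hp hhr hh hw
  have hDw' := hs.diam_lt_of_lt_dist hp hhr hh hw'
  have hpww' : dist (p w) (p w') < 3 / 4 := by
    have := dist_triangle4 (p w) (q w) (q w') (p w')
    have := hs.dist_le_diam w
    have := hs.dist_le_diam w'
    linarith [dist_comm (p w) (q w)]
  have heq : neighbors p w = neighbors p w' :=
    (neighbors_subset_of_diam_add_dist_le (by linarith)).antisymm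
      (neighbors_subset_of_diam_add_dist_le (by rw [dist_comm]; linarith))
  exact hcollapse w w' heq (by linarith)

/-- A robot still in the boundary layer of depth `h` after the second round saw a cluster in
which at most one point, the common position of all robots of the layer it saw, is not `h`-deep. -/
theorem eq_or_dist_le_of_two_steps [Finite ι] (h01 : GatheringStep lam p q)
    (h12 : GatheringStep lam q q')
    (hcollapse : ∀ i j, neighbors p i = neighbors p j →
      diam (p '' neighbors p i) ≤ 1 / 2 → q i = q j)
    (hconn : (SimpleGraph.fromRel fun i j => dist (q i) (q j) ≤ 1).Connected)
    {c : E} {r h : ℝ} (hp : ∀ j, p j ∈ closedBall c r) (hlam : lam ≤ 1) (hh0 : 0 ≤ h)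
    (hhr : h ≤ r) (hh : 128 * r * h ≤ lam ^ 2) :
    (∃ z, ∀ k, q' k = z) ∨ ∀ k, dist (q' k) c ≤ r - lam * h / 2 := by
  have hq := h01.mem_closedBall hp
  by_cases hD0 : ∃ i, diam (q '' neighbors q i) = 0
  · obtain ⟨i, hi⟩ := hD0
    exact .inl ⟨q i, h12.eq_of_forall_eq (eq_of_diam_image_neighbors_eq_zero hconn hi)⟩
  push Not at hD0
  refine .inr fun k => ?_
  by_cases hk : dist (q' k) c ≤ r - h
  · nlinarith
  push Not at hk
  have hD := h12.diam_lt_of_lt_dist hq hhr hh hk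
  obtain ⟨P, hP, hdeep⟩ : ∃ P ∈ q '' neighbors q k,
      ∀ v ∈ q '' neighbors q k, v ≠ P → dist v c ≤ r - h := by
    by_cases hsh : ∃ P ∈ q '' neighbors q k, r - h < dist P c
    · obtain ⟨P, hP, hPc⟩ := hsh
      refine ⟨P, hP, fun v hv hvP => ?_⟩
      by_contra! hvc
      obtain ⟨w, hw, rfl⟩ := hv
      obtain ⟨w', hw', rfl⟩ := hP
      exact hvP (h01.eq_of_lt_dist hcollapse hp hhr hh hvc hPc
        ((dist_le_diam_image_neighbors hw hw').trans_lt hD))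
    · push Not at hsh
      exact ⟨q k, mem_image_of_mem q (self_mem_neighbors q k), fun v hv _ => hsh v hv⟩
  exact h12.dist_le_of_forall_ne_dist_le hq hh0 (diam_nonneg.lt_of_ne' (hD0 k)) hP hdeep

end GatheringStep

end InnerProductSpace

theorem sqrt_two_mul_pow_div_lt {lam R Δ : ℝ} (hlam : 0 < lam) (hR : 0 < R) (hRΔ : R ≤ Δ) :
    Real.sqrt 2 * lam ^ 3 / (256 * Real.pi * Δ) < lam ^ 3 / (256 * R) := by
  have hsqrt : Real.sqrt 2 * R < Real.pi * Δ := calc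
    Real.sqrt 2 * R < Real.pi * R := by
      gcongr ?_ * _
      exact (Real.sqrt_lt' Real.pi_pos).2 (by nlinarith [Real.pi_gt_three])
    _ ≤ Real.pi * Δ := mul_le_mul_of_nonneg_left hRΔ Real.pi_pos.le
  rw [div_lt_div_iff₀ (by nlinarith [Real.pi_pos]) (by positivity)]
  nlinarith [mul_lt_mul_of_pos_left hsqrt (pow_pos hlam 3)]

theorem sec_radius_decrease_dD_general
    (n d : ℕ) (lam : ℝ) (hlam0 : 0 < lam) (hlam1 : lam ≤ 1)
    (x : ℕ → Fin n → EuclideanSpace ℝ (Fin d))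
    (hmove : ∀ (t : ℕ) (i : Fin n), ∃ a b : EuclideanSpace ℝ (Fin d),
      segment ℝ a b ⊆ convexHull ℝ (x t '' {j | dist (x t j) (x t i) ≤ 1}) ∧
      dist a b = lam * Metric.diam (x t '' {j | dist (x t j) (x t i) ≤ 1}) ∧
      x (t + 1) i = midpoint ℝ a b)
    (hconn : ∀ t : ℕ,
      (SimpleGraph.fromRel (fun i j : Fin n => dist (x t i) (x t j) ≤ 1)).Connected)
    (hcollapse : ∀ (t : ℕ) (i j : Fin n),
      {k | dist (x t k) (x t i) ≤ 1} = {k | dist (x t k) (x t j) ≤ 1} →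
      Metric.diam (x t '' {k | dist (x t k) (x t i) ≤ 1}) ≤ 1 / 2 →
      x (t + 1) i = x (t + 1) j)
    -- c s, R s are center and radius of the smallest enclosing hypersphere in round s
    (c : ℕ → EuclideanSpace ℝ (Fin d)) (R : ℕ → ℝ)
    (hball : ∀ (s : ℕ) (i : Fin n), x s i ∈ Metric.closedBall (c s) (R s))
    (hmin : ∀ (s : ℕ) (c' : EuclideanSpace ℝ (Fin d)) (r' : ℝ), 0 ≤ r' →
      (∀ i : Fin n, x s i ∈ Metric.closedBall c' r') → R s ≤ r')
    (t : ℕ) (hdiam : 1 / 2 ≤ Metric.diam (Set.range (x t))) :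
    R (t + 2) ≤ R t -
      Real.sqrt 2 * lam ^ 3 / (256 * Real.pi * Metric.diam (Set.range (x 0))) := by
  have hstep : ∀ s, GatheringStep lam (x s) (x (s + 1)) := hmove
  have : Nonempty (Fin n) := by
    by_contra! hempty
    norm_num [range_eq_empty] at hdiam
  have hRΔ : R t ≤ diam (range (x 0)) :=
    (le_diam_range_of_forall_mem_closedBall_le (hmin t)).trans
      (diam_range_le_diam_range_zero hstep t)
  have hR : 1 / 4 ≤ R t := by
    have hR0 : 0 ≤ R t := dist_nonneg.trans (hball t (Classical.arbitrary _))
    linarith [(diam_mono (range_subset_iff.2 (hball t)) isBounded_closedBall).trans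
      (diam_closedBall hR0)]
  set h := lam ^ 2 / (128 * R t) with hdef
  have hh : 128 * R t * h = lam ^ 2 := by
    rw [hdef]
    field_simp
  have hhr : h ≤ R t := by
    rw [hdef, div_le_iff₀ (by positivity)]
    nlinarith [pow_le_one₀ (n := 2) hlam0.le hlam1]
  have hdepth : lam * h / 2 = lam ^ 3 / (256 * R t) := by
    rw [hdef]
    field_simp
    ring
  have hsqrt_lt := sqrt_two_mul_pow_div_lt hlam0 (by linarith) hRΔ
  rcases (hstep t).eq_or_dist_le_of_two_steps (hstep (t + 1)) (hcollapse t) (hconn (t + 1))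
    (hball t) hlam1 (by positivity) hhr hh.le with ⟨z, hz⟩ | hdeep
  · have := hmin (t + 2) z 0 le_rfl fun k => by simp [hz k]
    nlinarith
  · have := hmin (t + 2) (c t) _ (by nlinarith) fun k => mem_closedBall.2 (hdeep k)
    linarith

/-- For a λ-gathering trajectory in ℝ^d, the radius of the global smallest
enclosing hypersphere decreases by at least √2·λ³/(256·π·Δ) every two rounds as long as the
diameter is at least 1/2. -/
theorem sec_radius_decrease_dD
    (n d : ℕ) (hn : 1 ≤ n) (hd : 1 ≤ d) (lam : ℝ) (hlam0 : 0 < lam) (hlam1 : lam ≤ 1)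
    (x : ℕ → Fin n → EuclideanSpace ℝ (Fin d))
    (hmove : ∀ (t : ℕ) (i : Fin n), ∃ a b : EuclideanSpace ℝ (Fin d),
      segment ℝ a b ⊆ convexHull ℝ (x t '' {j | dist (x t j) (x t i) ≤ 1}) ∧
      dist a b = lam * Metric.diam (x t '' {j | dist (x t j) (x t i) ≤ 1}) ∧
      x (t + 1) i = midpoint ℝ a b)
    (hconn : ∀ t : ℕ,
      (SimpleGraph.fromRel (fun i j : Fin n => dist (x t i) (x t j) ≤ 1)).Connected)
    (hcollapse : ∀ (t : ℕ) (i j : Fin n),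
      {k | dist (x t k) (x t i) ≤ 1} = {k | dist (x t k) (x t j) ≤ 1} →
      Metric.diam (x t '' {k | dist (x t k) (x t i) ≤ 1}) ≤ 1 / 2 →
      x (t + 1) i = x (t + 1) j)
    -- c s, R s are center and radius of the smallest enclosing hypersphere in round s
    (c : ℕ → EuclideanSpace ℝ (Fin d)) (R : ℕ → ℝ) (hR0 : ∀ s : ℕ, 0 ≤ R s)
    (hball : ∀ (s : ℕ) (i : Fin n), x s i ∈ Metric.closedBall (c s) (R s))
    (hmin : ∀ (s : ℕ) (c' : EuclideanSpace ℝ (Fin d)) (r' : ℝ), 0 ≤ r' →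
      (∀ i : Fin n, x s i ∈ Metric.closedBall c' r') → R s ≤ r')
    (t : ℕ) (hdiam : 1 / 2 ≤ Metric.diam (Set.range (x t))) :
    R (t + 2) ≤ R t -
      Real.sqrt 2 * lam ^ 3 / (256 * Real.pi * Metric.diam (Set.range (x 0))) :=
  sec_radius_decrease_dD_general n d lam hlam0 hlam1 x hmove hconn hcollapse c R hball hmin t hdiam
end
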